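/- Let λ, μ > 0 with ρ = λ/μ < 1, and let a, b ≥ 0 be integers. Then ∫₀^∞ f_{a+1}(t) · ∑_{n=0}^∞ p_{b,n}(t)·(n+1)/μ dt = 1/μ + (1/μ)·∫₀^∞ f_{a+1}(t)·EL_b(t) dt, where f_{a+1}(t) = μ^{a+1} t^a e^{−μ t}/a!, p_{b,n}(t) is given by the explicit transient probability formula, and EL_b(t) is given by the explicit expected-length formula; consequently (a+1)/μ + ∫₀^∞ f_{a+1}(t) ∑_{n=0}^∞ p_{b,n}(t)·(n+1)/μ dt = (a+2)/μ + (1/μ)·∫₀^∞ f_{a+1}(t)·EL_b(t) dt. -/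

import Mathlib

open Real MeasureTheory Set Filter

/-- γ(y) = 1 + ρ − 2√ρ·cos(y). -/
noncomputable def gam (ρ y : ℝ) : ℝ := 1 + ρ - 2 * Real.sqrt ρ * Real.cos y

/-- a_k(y) = sin(k·y) − √ρ·sin((k+1)·y). -/
noncomputable def aco (ρ : ℝ) (k : ℕ) (y : ℝ) : ℝ :=
  Real.sin ((k : ℝ) * y) - Real.sqrt ρ * Real.sin (((k : ℝ) + 1) * y)

/-- Transient expected queue length of an M/M/1 queue started with `i` customers. -/
noncomputable def EL (lam mu : ℝ) (i : ℕ) (t : ℝ) : ℝ :=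
  (2 / Real.pi) * (lam / mu) ^ ((1 - (i : ℝ)) / 2) *
    (∫ y in (0 : ℝ)..Real.pi,
      Real.exp (-(mu * t * gam (lam / mu) y)) / (gam (lam / mu) y) ^ 2 *
        (aco (lam / mu) i y * Real.sin y)) +
  (lam / mu) / (1 - lam / mu)

/-- Transient probability that an M/M/1 queue started with `i` customers has `j` at time `t`. -/
noncomputable def pq (lam mu : ℝ) (i j : ℕ) (t : ℝ) : ℝ :=
  (2 / Real.pi) * (lam / mu) ^ (((j : ℝ) - (i : ℝ)) / 2) *
    (∫ y in (0 : ℝ)..Real.pi,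
      Real.exp (-(mu * t * gam (lam / mu) y)) / gam (lam / mu) y *
        (aco (lam / mu) i y * aco (lam / mu) j y)) +
  (1 - lam / mu) * (lam / mu) ^ j

/-- Erlang(n) density with rate `mu`: f_n(t) = μⁿ t^{n−1} e^{−μt}/(n−1)!. -/
noncomputable def erl (mu : ℝ) (n : ℕ) (t : ℝ) : ℝ :=
  mu ^ n * t ^ (n - 1) * Real.exp (-(mu * t)) / (Nat.factorial (n - 1) : ℝ)

/-- Expected total time to complete queue with `a` customers first, then queue with `b`. -/
noncomputable def ETT (lam mu : ℝ) (a b : ℕ) : ℝ :=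
  ((a : ℝ) + 2) / mu + (1 / mu) * ∫ t in Set.Ioi (0 : ℝ), erl mu (a + 1) t * EL lam mu b t

/-! With `x = √ρ`, summation by parts against the imaginary part of the geometric series
`∑ (x e^{iy})ⁿ` gives `∑ₙ (n+1) xⁿ aₙ(y) = x sin y / γ(y)`. Integrating this term by term against
the spectral kernel (dominated convergence on `[0, π]`), and adding the stationary part
`∑ₙ (n+1)(1-ρ)ρⁿ = 1/(1-ρ)`, yields `∑ₙ p_{b,n}(t)(n+1) = EL_b(t) + 1` for every `t`.
Since `EL_b` is bounded on `[0, ∞)` and the Erlang density is a probability density,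
integrating against `f_{a+1}` gives the identity. -/

lemma one_sub_sqrt_sq_le_gam {ρ : ℝ} (hρ : 0 ≤ ρ) (y : ℝ) : (1 - √ρ) ^ 2 ≤ gam ρ y := by
  have := Real.sq_sqrt hρ
  unfold gam
  nlinarith [Real.cos_le_one y, Real.sqrt_nonneg ρ]

lemma sqrt_lt_one_of_lt_one {ρ : ℝ} (hρ : ρ < 1) : √ρ < 1 :=
  (Real.sqrt_lt' one_pos).2 (by simpa using hρ)

lemma gam_pos {ρ : ℝ} (hρ0 : 0 ≤ ρ) (hρ1 : ρ < 1) (y : ℝ) : 0 < gam ρ y :=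
  (pow_pos (sub_pos.2 (sqrt_lt_one_of_lt_one hρ1)) 2).trans_le (one_sub_sqrt_sq_le_gam hρ0 y)

lemma continuous_gam (ρ : ℝ) : Continuous (gam ρ) := by
  unfold gam; fun_prop

lemma continuous_aco (ρ : ℝ) (k : ℕ) : Continuous (aco ρ k) := by
  unfold aco; fun_prop

lemma abs_aco_le_two {ρ : ℝ} (hρ : ρ ≤ 1) (k : ℕ) (y : ℝ) : |aco ρ k y| ≤ 2 := by
  have hsqrt : |√ρ| ≤ 1 := (abs_of_nonneg (Real.sqrt_nonneg ρ)).trans_le (Real.sqrt_le_one.2 hρ)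
  rw [aco]
  calc |sin (k * y) - √ρ * sin ((k + 1) * y)|
      ≤ |sin (k * y)| + |√ρ| * |sin ((k + 1) * y)| := by rw [← abs_mul]; exact abs_sub _ _
    _ ≤ 1 + 1 * 1 := by gcongr <;> exact abs_sin_le_one _
    _ = 2 := by norm_num

lemma hasSum_pow_mul_sin {x : ℝ} (hx : |x| < 1) (y : ℝ) :
    HasSum (fun n : ℕ => x ^ n * sin (n * y)) (x * sin y / (1 + x ^ 2 - 2 * x * cos y)) := by
  set z : ℂ := x * Complex.exp (y * Complex.I) with hz
  have hz_norm : ‖z‖ < 1 := by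
    rwa [hz, norm_mul, Complex.norm_exp_ofReal_mul_I, mul_one, Complex.norm_real, Real.norm_eq_abs]
  have him_pow (n : ℕ) : (z ^ n).im = x ^ n * sin (n * y) := by
    rw [hz, mul_pow, ← Complex.exp_nat_mul, ← Complex.ofReal_pow,
      show (n : ℂ) * (y * Complex.I) = ((n * y : ℝ) : ℂ) * Complex.I by push_cast; ring,
      Complex.im_ofReal_mul, Complex.exp_ofReal_mul_I_im]
  have him_inv : ((1 - z)⁻¹).im = x * sin y / (1 + x ^ 2 - 2 * x * cos y) := by
    have hnormSq : Complex.normSq (1 - z) = 1 + x ^ 2 - 2 * x * cos y := by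
      simp [Complex.normSq_apply, hz, Complex.exp_ofReal_mul_I_re, Complex.exp_ofReal_mul_I_im]
      nlinarith [sin_sq_add_cos_sq y]
    rw [Complex.inv_im, hnormSq, Complex.sub_im, Complex.one_im, hz, Complex.im_ofReal_mul,
      Complex.exp_ofReal_mul_I_im]
    ring
  have := (hasSum_geometric_of_norm_lt_one hz_norm).mapL Complex.imCLM
  simpa only [Complex.imCLM_apply, him_pow, him_inv] using this

lemma HasSum.succ_mul_sub_succ {s : ℕ → ℝ} {σ : ℝ} (hs : HasSum s σ)
    (hns : Summable fun n : ℕ => n * s n) :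
    HasSum (fun n : ℕ => (n + 1) * (s n - s (n + 1))) σ := by
  obtain ⟨T, hT⟩ := hns
  have hT_shift : HasSum (fun n : ℕ => ((n + 1 : ℕ) : ℝ) * s (n + 1)) T := by
    simpa using (hasSum_nat_add_iff' 1).2 hT
  have h := (hs.add hT).sub hT_shift
  rw [add_sub_cancel_right] at h
  refine h.congr_fun fun n => ?_
  push_cast
  ring

lemma hasSum_succ_mul_sqrt_pow_mul_aco {ρ : ℝ} (hρ0 : 0 ≤ ρ) (hρ1 : ρ < 1) (y : ℝ) :
    HasSum (fun n : ℕ => (n + 1) * √ρ ^ n * aco ρ n y) (√ρ * sin y / gam ρ y) := by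
  have hx : |√ρ| < 1 := by rw [abs_of_nonneg (Real.sqrt_nonneg ρ)]; exact sqrt_lt_one_of_lt_one hρ1
  set s : ℕ → ℝ := fun n => √ρ ^ n * sin (n * y)
  have hs : HasSum s (√ρ * sin y / gam ρ y) := by
    simpa only [gam, Real.sq_sqrt hρ0] using hasSum_pow_mul_sin hx y
  have hns : Summable fun n : ℕ => n * s n := by
    refine Summable.of_norm_bounded (g := fun n : ℕ => (n : ℝ) ^ 1 * √ρ ^ n)
      (summable_pow_mul_geometric_of_norm_lt_one 1 hx) fun n => ?_
    rw [pow_one, norm_mul, norm_mul, Real.norm_natCast, norm_pow, Real.norm_eq_abs,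
      abs_of_nonneg (Real.sqrt_nonneg ρ)]
    exact mul_le_mul_of_nonneg_left
      (mul_le_of_le_one_right (by positivity) (abs_sin_le_one _)) n.cast_nonneg
  convert hs.succ_mul_sub_succ hns using 2 with n
  simp only [s, aco]
  push_cast
  ring

lemma hasSum_succ_mul_sqrt_pow_mul_integral_aco {ρ : ℝ} (hρ0 : 0 ≤ ρ) (hρ1 : ρ < 1)
    {g : ℝ → ℝ} (hg : Continuous g) :
    HasSum (fun n : ℕ => (n + 1) * √ρ ^ n * ∫ y in 0..π, g y * aco ρ n y)
      (√ρ * ∫ y in 0..π, g y * sin y / gam ρ y) := by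
  obtain ⟨C, hC⟩ := (isCompact_uIcc (a := 0) (b := π)).exists_bound_of_continuousOn hg.continuousOn
  have hC0 : 0 ≤ C := (norm_nonneg _).trans (hC 0 left_mem_uIcc)
  have hx : |√ρ| < 1 := by rw [abs_of_nonneg (Real.sqrt_nonneg ρ)]; exact sqrt_lt_one_of_lt_one hρ1
  have hsucc : Summable fun n : ℕ => (n + 1) * √ρ ^ n := by
    simpa [add_mul] using
      (summable_pow_mul_geometric_of_norm_lt_one 1 hx).add (summable_geometric_of_abs_lt_one hx)
  simp_rw [← intervalIntegral.integral_const_mul]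
  refine intervalIntegral.hasSum_integral_of_dominated_convergence
    (fun n _ => (n + 1) * √ρ ^ n * (C * 2)) (fun n => ?_) (fun n => ?_)
    (.of_forall fun _ _ => hsucc.mul_right _) intervalIntegrable_const (.of_forall fun y _ => ?_)
  · exact (continuous_const.mul (hg.mul (continuous_aco ρ n))).aestronglyMeasurable
  · refine .of_forall fun y hy => ?_
    rw [norm_mul, norm_mul (g y), Real.norm_of_nonneg (by positivity)]
    gcongr
    · exact hC y (uIoc_subset_uIcc hy)
    · exact (Real.norm_eq_abs _).trans_le (abs_aco_le_two hρ1.le n y)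
  have h := (hasSum_succ_mul_sqrt_pow_mul_aco hρ0 hρ1 y).mul_left (g y)
  rw [show g y * (√ρ * sin y / gam ρ y) = √ρ * (g y * sin y / gam ρ y) by ring] at h
  exact h.congr_fun fun n => by ring

lemma rpow_natCast_sub_div_two {ρ : ℝ} (hρ : 0 < ρ) (n : ℕ) (r : ℝ) :
    ρ ^ ((n - r) / 2) = √ρ ^ n * ρ ^ (-r / 2) := by
  rw [Real.sqrt_eq_rpow, ← Real.rpow_natCast, ← Real.rpow_mul hρ.le, ← Real.rpow_add hρ]
  ring_nf

lemma hasSum_pq_mul_succ {lam mu : ℝ} (hρ0 : 0 < lam / mu) (hρ1 : lam / mu < 1) (b : ℕ) (t : ℝ) :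
    HasSum (fun n : ℕ => pq lam mu b n t * (n + 1)) (EL lam mu b t + 1) := by
  set ρ := lam / mu with hρ
  set g : ℝ → ℝ := fun y => exp (-(mu * t * gam ρ y)) / gam ρ y * aco ρ b y
  have hg : Continuous g := by
    have := continuous_gam ρ
    have := continuous_aco ρ b
    exact Continuous.mul (by fun_prop (disch := exact fun y => (gam_pos hρ0.le hρ1 y).ne')) this
  have hρ_norm : ‖ρ‖ < 1 := by rwa [Real.norm_of_nonneg hρ0.le]
  have hspectral := (hasSum_succ_mul_sqrt_pow_mul_integral_aco hρ0.le hρ1 hg).mul_left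
    (2 / π * ρ ^ (-(b : ℝ) / 2))
  have hstationary := ((hasSum_coe_mul_geometric_of_norm_lt_one hρ_norm).add
    (hasSum_geometric_of_norm_lt_one hρ_norm)).mul_left (1 - ρ)
  have hI : ∫ y in 0..π, g y * sin y / gam ρ y
      = ∫ y in 0..π, exp (-(mu * t * gam ρ y)) / gam ρ y ^ 2 * (aco ρ b y * sin y) :=
    intervalIntegral.integral_congr fun y _ => by simp only [g]; ring
  have hρ_ne : 1 - ρ ≠ 0 := (sub_pos.2 hρ1).ne'
  have hvalue : 2 / π * ρ ^ (-(b : ℝ) / 2) * (√ρ * ∫ y in 0..π, g y * sin y / gam ρ y)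
      + (1 - ρ) * (ρ / (1 - ρ) ^ 2 + (1 - ρ)⁻¹) = EL lam mu b t + 1 := by
    rw [EL, ← hρ, hI, show (1 : ℝ) - b = ((1 : ℕ) : ℝ) - b by norm_num,
      rpow_natCast_sub_div_two hρ0]
    field_simp
    ring
  refine hvalue ▸ (hspectral.add hstationary).congr_fun fun n => ?_
  rw [pq, ← hρ, rpow_natCast_sub_div_two hρ0]
  simp only [g, mul_assoc]
  ring

lemma erl_succ (mu : ℝ) (a : ℕ) (t : ℝ) :
    erl mu (a + 1) t = mu ^ (a + 1) / a.factorial * (t ^ a * exp (-(mu * t))) := by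
  rw [erl, Nat.add_sub_cancel]
  ring

lemma integral_erl_Ioi {mu : ℝ} (hmu : 0 < mu) (a : ℕ) : ∫ t in Ioi 0, erl mu (a + 1) t = 1 := by
  have h := integral_rpow_mul_exp_neg_mul_Ioi (a := a + 1) (by positivity) hmu
  rw [add_sub_cancel_right, Real.Gamma_nat_eq_factorial, ← Nat.cast_succ] at h
  simp only [Real.rpow_natCast] at h
  simp_rw [erl_succ]
  rw [integral_const_mul, h, div_pow, one_pow]
  field_simp

lemma integrableOn_erl_Ioi {mu : ℝ} (hmu : 0 < mu) (a : ℕ) :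
    IntegrableOn (erl mu (a + 1)) (Ioi 0) :=
  Integrable.of_integral_ne_zero (by rw [integral_erl_Ioi hmu a]; exact one_ne_zero)

lemma continuous_EL {lam mu : ℝ} (hρ0 : 0 ≤ lam / mu) (hρ1 : lam / mu < 1) (b : ℕ) :
    Continuous (EL lam mu b) := by
  have := continuous_gam (lam / mu)
  have := continuous_aco (lam / mu) b
  unfold EL
  fun_prop (disch := intros; exact pow_ne_zero 2 (gam_pos hρ0 hρ1 _).ne')

lemma exists_norm_EL_le {lam mu : ℝ} (hmu : 0 ≤ mu) (hρ0 : 0 ≤ lam / mu) (hρ1 : lam / mu < 1)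
    (b : ℕ) : ∃ C, ∀ t, 0 ≤ t → ‖EL lam mu b t‖ ≤ C := by
  set ρ := lam / mu with hρ
  set bound : ℝ → ℝ := fun y => |aco ρ b y * sin y| / gam ρ y ^ 2
  have hbound : IntervalIntegrable bound volume 0 π := by
    have := continuous_gam ρ
    have := continuous_aco ρ b
    refine Continuous.intervalIntegrable ?_ _ _
    fun_prop (disch := intros; exact pow_ne_zero 2 (gam_pos hρ0 hρ1 _).ne')
  refine ⟨|2 / π * ρ ^ ((1 - (b : ℝ)) / 2)| * (∫ y in 0..π, bound y) + |ρ / (1 - ρ)|,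
    fun t ht => ?_⟩
  have hI : ‖∫ y in 0..π, exp (-(mu * t * gam ρ y)) / gam ρ y ^ 2 * (aco ρ b y * sin y)‖
      ≤ ∫ y in 0..π, bound y := by
    refine intervalIntegral.norm_integral_le_of_norm_le pi_pos.le (.of_forall fun y _ => ?_) hbound
    have hexp : exp (-(mu * t * gam ρ y)) ≤ 1 :=
      exp_le_one_iff.2 (neg_nonpos.2 (by have := gam_pos hρ0 hρ1 y; positivity))
    simp only [bound]
    rw [norm_mul, Real.norm_of_nonneg (by positivity), Real.norm_eq_abs, div_mul_eq_mul_div]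
    gcongr ?_ / _
    exact mul_le_of_le_one_left (abs_nonneg _) hexp
  rw [EL, ← hρ]
  refine (norm_add_le _ _).trans (add_le_add ?_ (Real.norm_eq_abs _).le)
  rw [norm_mul, Real.norm_eq_abs]
  gcongr

/-- The key identity behind Theorem 2.1:
∫₀^∞ f_{a+1}(t)·∑ₙ p_{b,n}(t)·(n+1)/μ dt = 1/μ + (1/μ)·∫₀^∞ f_{a+1}(t)·EL_b(t) dt,
and consequently
(a+1)/μ + ∫₀^∞ f_{a+1}(t)·∑ₙ p_{b,n}(t)·(n+1)/μ dt
  = (a+2)/μ + (1/μ)·∫₀^∞ f_{a+1}(t)·EL_b(t) dt. -/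
theorem ETT_identity (lam mu : ℝ) (hlam : 0 < lam) (hmu : 0 < mu)
    (hρ : lam / mu < 1) (a b : ℕ) :
    (∫ t in Set.Ioi (0 : ℝ),
        erl mu (a + 1) t * ∑' n : ℕ, pq lam mu b n t * (((n : ℝ) + 1) / mu))
      = 1 / mu + (1 / mu) * ∫ t in Set.Ioi (0 : ℝ), erl mu (a + 1) t * EL lam mu b t ∧
    ((a : ℝ) + 1) / mu +
        (∫ t in Set.Ioi (0 : ℝ),
          erl mu (a + 1) t * ∑' n : ℕ, pq lam mu b n t * (((n : ℝ) + 1) / mu))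
      = ((a : ℝ) + 2) / mu +
        (1 / mu) * ∫ t in Set.Ioi (0 : ℝ), erl mu (a + 1) t * EL lam mu b t := by
  have hρ0 : 0 < lam / mu := div_pos hlam hmu
  have hsum (t : ℝ) : ∑' n : ℕ, pq lam mu b n t * ((n + 1) / mu) = (EL lam mu b t + 1) / mu := by
    simpa only [mul_div_assoc] using ((hasSum_pq_mul_succ hρ0 hρ b t).div_const mu).tsum_eq
  obtain ⟨C, hC⟩ := exists_norm_EL_le hmu.le hρ0.le hρ b
  have hint : IntegrableOn (fun t => erl mu (a + 1) t * EL lam mu b t) (Ioi 0) :=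
    (integrableOn_erl_Ioi hmu a).mul_bdd (continuous_EL hρ0.le hρ b).aestronglyMeasurable
      ((ae_restrict_iff' measurableSet_Ioi).2 (.of_forall fun t ht => hC t (le_of_lt ht)))
  have hmain : ∫ t in Ioi 0, erl mu (a + 1) t * ∑' n : ℕ, pq lam mu b n t * ((n + 1) / mu)
      = 1 / mu + 1 / mu * ∫ t in Ioi 0, erl mu (a + 1) t * EL lam mu b t := by
    simp_rw [hsum]
    calc ∫ t in Ioi 0, erl mu (a + 1) t * ((EL lam mu b t + 1) / mu)
        = ∫ t in Ioi 0,
            1 / mu * (erl mu (a + 1) t * EL lam mu b t) + 1 / mu * erl mu (a + 1) t := by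
          congr with t; ring
      _ = _ := by
          rw [integral_add (hint.const_mul _) ((integrableOn_erl_Ioi hmu a).const_mul _),
            integral_const_mul, integral_const_mul, integral_erl_Ioi hmu a]
          ring
  refine ⟨hmain, ?_⟩
  rw [hmain]
  ring
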